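/- arXiv:2512.09551 — 3 statements merged into one kernel-verified Lean document; each statement's English description precedes it below -/
import Mathlib

section
/- The right Jacobian J_r(φ) = I − ((1−cos θ)/θ²)[φ]× + ((θ−sin θ)/θ³)[φ]×², with θ = ‖φ‖, satisfies J_r(0) = I, where the coefficient functions (1−cos θ)/θ² and (θ−sin θ)/θ³ are extended continuously at θ = 0 by 1/2 and 1/6 respectively; moreover, J_r(φ) is invertible for all φ with ‖φ‖ < 2π. -/
/-- The cross-product matrix [φ]× with [φ]× v = φ × v. -/
def crossMat (φ : Fin 3 → ℝ) : Matrix (Fin 3) (Fin 3) ℝ :=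
  !![0, -φ 2, φ 1; φ 2, 0, -φ 0; -φ 1, φ 0, 0]

/-- Euclidean norm on ℝ³. -/
noncomputable def enorm3 (φ : Fin 3 → ℝ) : ℝ := Real.sqrt (∑ i, φ i ^ 2)

/-- (1−cos θ)/θ², extended continuously at 0 by 1/2. -/
noncomputable def acoef (θ : ℝ) : ℝ := if θ = 0 then 1 / 2 else (1 - Real.cos θ) / θ ^ 2

/-- (θ−sin θ)/θ³, extended continuously at 0 by 1/6. -/
noncomputable def bcoef (θ : ℝ) : ℝ := if θ = 0 then 1 / 6 else (θ - Real.sin θ) / θ ^ 3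

/-- The right Jacobian J_r(φ) = I − ((1−cos θ)/θ²)[φ]× + ((θ−sin θ)/θ³)[φ]×². -/
noncomputable def rightJacobian (φ : Fin 3 → ℝ) : Matrix (Fin 3) (Fin 3) ℝ :=
  1 - acoef (enorm3 φ) • crossMat φ + bcoef (enorm3 φ) • crossMat φ ^ 2

/-!
Any matrix `1 - a [φ]× + b [φ]×²` has determinant `(1 - b θ²)² + (a θ)²`: in an orthonormal
basis with first vector `φ / θ` it is block diagonal with blocks `1` and
`(1 - b θ²) I₂ - a θ J`, where `J` is the rotation by a right angle. For `J_r(φ)` with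
`0 < θ < 2π` the second square is positive since `cos θ ≠ 1`, and for `θ = 0` the first is `1`.
-/

lemma crossMat_zero : crossMat 0 = 0 := by
  ext i j
  fin_cases i <;> fin_cases j <;> simp [crossMat]

lemma enorm3_sq (φ : Fin 3 → ℝ) : enorm3 φ ^ 2 = φ 0 ^ 2 + φ 1 ^ 2 + φ 2 ^ 2 := by
  rw [enorm3, Real.sq_sqrt (by positivity), Fin.sum_univ_three]

lemma det_one_sub_smul_crossMat_add_smul_crossMat_sq (a b : ℝ) (φ : Fin 3 → ℝ) :
    (1 - a • crossMat φ + b • crossMat φ ^ 2).det =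
      (1 - b * enorm3 φ ^ 2) ^ 2 + (a * enorm3 φ) ^ 2 := by
  rw [mul_pow, enorm3_sq]
  simp [crossMat, Matrix.det_fin_three, pow_two]
  ring

lemma acoef_ne_zero {θ : ℝ} (hpos : 0 < θ) (hlt : θ < 2 * Real.pi) : acoef θ ≠ 0 := by
  have hcos : Real.cos θ ≠ 1 := fun h =>
    hpos.ne' ((Real.cos_eq_one_iff_of_lt_of_lt (by linarith [Real.pi_pos]) hlt).mp h)
  rw [acoef, if_neg hpos.ne']
  exact div_ne_zero (sub_ne_zero.mpr hcos.symm) (pow_ne_zero 2 hpos.ne')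

/-- J_r(0) = I, and J_r(φ) is invertible for all φ with ‖φ‖ < 2π. -/
theorem stmt_9 :
    rightJacobian 0 = 1 ∧
    ∀ φ : Fin 3 → ℝ, enorm3 φ < 2 * Real.pi → IsUnit (rightJacobian φ) := by
  refine ⟨by simp [rightJacobian, crossMat_zero], fun φ hφ => ?_⟩
  rw [Matrix.isUnit_iff_isUnit_det, isUnit_iff_ne_zero, rightJacobian,
    det_one_sub_smul_crossMat_add_smul_crossMat_sq]
  have hθ : 0 ≤ enorm3 φ := Real.sqrt_nonneg _
  rcases hθ.eq_or_lt with h0 | hpos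
  · simp [← h0]
  · have : acoef (enorm3 φ) * enorm3 φ ≠ 0 := mul_ne_zero (acoef_ne_zero hpos hφ) hpos.ne'
    positivity
end

section
/- The determinant of the right Jacobian J_r(φ) equals 2(1 − cos θ)/θ² for θ = ‖φ‖ ≠ 0 (and 1 at φ = 0); in particular det J_r(φ) > 0 whenever 0 ≤ θ < 2π. -/
/-
With K = [φ]×, the determinant of 1 - aK + bK² is (1 - bθ²)² + a²θ²: K has eigenvalues 0, ±iθ,
so the eigenvalues of 1 - aK + bK² are 1 and 1 - bθ² ∓ iaθ. For a = (1 - cos θ)/θ² and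
b = (θ - sin θ)/θ³ this is (sin θ/θ)² + ((1 - cos θ)/θ)² = 2(1 - cos θ)/θ², which is positive
for 0 < θ < 2π because cos θ = 1 only at multiples of 2π.
-/

lemma enorm3_nonneg (φ : Fin 3 → ℝ) : 0 ≤ enorm3 φ :=
  Real.sqrt_nonneg _

lemma det_one_sub_smul_crossMat_add_smul_sq (φ : Fin 3 → ℝ) (a b : ℝ) :
    (1 - a • crossMat φ + b • crossMat φ ^ 2).det
      = (1 - b * enorm3 φ ^ 2) ^ 2 + a ^ 2 * enorm3 φ ^ 2 := by
  rw [enorm3_sq, Matrix.det_fin_three]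
  simp only [crossMat, pow_two, Matrix.add_apply, Matrix.sub_apply, Matrix.smul_apply,
    Matrix.mul_apply, Fin.sum_univ_three, Matrix.one_apply, Matrix.of_apply, smul_eq_mul,
    Fin.isValue, Fin.reduceEq, if_true, if_false, Matrix.cons_val_zero, Matrix.cons_val_one,
    Matrix.cons_val_two, Matrix.head_cons, Matrix.tail_cons]
  ring

lemma det_rightJacobian (φ : Fin 3 → ℝ) :
    (rightJacobian φ).det
      = (1 - bcoef (enorm3 φ) * enorm3 φ ^ 2) ^ 2 + acoef (enorm3 φ) ^ 2 * enorm3 φ ^ 2 :=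
  det_one_sub_smul_crossMat_add_smul_sq φ _ _

lemma det_rightJacobian_of_enorm3_ne_zero {φ : Fin 3 → ℝ} (h : enorm3 φ ≠ 0) :
    (rightJacobian φ).det = 2 * (1 - Real.cos (enorm3 φ)) / enorm3 φ ^ 2 := by
  rw [det_rightJacobian, acoef, bcoef, if_neg h, if_neg h]
  field_simp
  linear_combination Real.sin_sq_add_cos_sq (enorm3 φ)

lemma det_rightJacobian_of_enorm3_eq_zero {φ : Fin 3 → ℝ} (h : enorm3 φ = 0) :
    (rightJacobian φ).det = 1 := by
  simp [det_rightJacobian, h]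

lemma Real.cos_lt_one_of_pos_of_lt_two_pi {x : ℝ} (h₀ : 0 < x) (h₁ : x < 2 * Real.pi) :
    Real.cos x < 1 :=
  (Real.cos_le_one x).lt_of_ne fun h =>
    h₀.ne' ((Real.cos_eq_one_iff_of_lt_of_lt (by linarith [Real.pi_pos]) h₁).mp h)

lemma det_rightJacobian_pos {φ : Fin 3 → ℝ} (hlt : enorm3 φ < 2 * Real.pi) :
    0 < (rightJacobian φ).det := by
  rcases (enorm3_nonneg φ).eq_or_lt with h | hpos
  · rw [det_rightJacobian_of_enorm3_eq_zero h.symm]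
    exact one_pos
  · rw [det_rightJacobian_of_enorm3_ne_zero hpos.ne']
    have := Real.cos_lt_one_of_pos_of_lt_two_pi hpos hlt
    exact div_pos (by linarith) (pow_pos hpos 2)

/-- det J_r(φ) = 2(1−cos θ)/θ² for θ = ‖φ‖ ≠ 0, det J_r(0) = 1, and
det J_r(φ) > 0 whenever θ < 2π. -/
theorem stmt_11 (φ : Fin 3 → ℝ) :
    (enorm3 φ ≠ 0 →
      (rightJacobian φ).det = 2 * (1 - Real.cos (enorm3 φ)) / (enorm3 φ) ^ 2) ∧
    (φ = 0 → (rightJacobian φ).det = 1) ∧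
    (enorm3 φ < 2 * Real.pi → 0 < (rightJacobian φ).det) :=
  ⟨det_rightJacobian_of_enorm3_ne_zero,
    fun h => det_rightJacobian_of_enorm3_eq_zero (by simp [enorm3, h]),
    det_rightJacobian_pos⟩
end

section
/- For the sphere S², the inverse of the exponential retraction is well-defined on the open hemisphere: if s, s' ∈ S² with ⟨s, s'⟩ > −1 and s' ≠ −s, setting θ = arccos⟨s, s'⟩ and w = (θ/sin θ)(s' − ⟨s, s'⟩ s) (with w = 0 when s' = s), then w ∈ T_s S² (i.e., ⟨s, w⟩ = 0), ‖w‖ = θ, and R_s(w) = s cos‖w‖ + w sinc(‖w‖) = s'. -/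
open scoped Classical

noncomputable def sinc (x : ℝ) : ℝ := if x = 0 then 1 else Real.sin x / x

noncomputable def sphRetract (s w : EuclideanSpace ℝ (Fin 3)) : EuclideanSpace ℝ (Fin 3) :=
  Real.cos ‖w‖ • s + sinc ‖w‖ • w

/-! For `s' ≠ s`, the vector `v = s' - ⟨s, s'⟩ s` is the component of `s'` orthogonal to `s`, and
Pythagoras gives `‖v‖ = √(1 - ⟨s, s'⟩²) = sin θ`. Hence `w = (θ / sin θ) v` is tangent at `s`
with `‖w‖ = θ`, and `R_s(w) = cos θ s + (sin θ / θ) w = ⟨s, s'⟩ s + v = s'`. The hypothesis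
`⟨s, s'⟩ > -1` keeps `θ < π`, so that `sin θ ≠ 0`. -/

open Real

section UnitVectors

variable {E : Type*} [NormedAddCommGroup E] [InnerProductSpace ℝ E] {s : E}

theorem inner_sub_inner_smul_self_eq_zero (hs : ‖s‖ = 1) (s' : E) :
    inner ℝ s (s' - inner ℝ s s' • s) = 0 := by
  rw [inner_sub_right, real_inner_smul_right, real_inner_self_eq_norm_sq, hs]
  ring

theorem norm_sub_inner_smul_self_eq_sin_arccos {s' : E} (hs : ‖s‖ = 1) (hs' : ‖s'‖ = 1) :
    ‖s' - inner ℝ s s' • s‖ = sin (arccos (inner ℝ s s')) := by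
  have hsq : ‖s' - inner ℝ s s' • s‖ ^ 2 = 1 - inner ℝ s s' ^ 2 := by
    rw [norm_sub_sq_real, real_inner_smul_right, norm_smul, real_inner_comm s', hs, hs',
      Real.norm_eq_abs, mul_one, sq_abs]
    ring
  rw [sin_arccos, ← hsq, sqrt_sq (norm_nonneg _)]

end UnitVectors

theorem sphRetract_zero (s : EuclideanSpace ℝ (Fin 3)) : sphRetract s 0 = s := by
  simp [sphRetract]

theorem sphRetract_of_norm_eq {s w : EuclideanSpace ℝ (Fin 3)} {θ : ℝ} (hθ : θ ≠ 0)
    (hw : ‖w‖ = θ) : sphRetract s w = cos θ • s + (sin θ / θ) • w := by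
  rw [sphRetract, hw, _root_.sinc, if_neg hθ]

theorem stmt_15_general (s s' : EuclideanSpace ℝ (Fin 3)) (hs : ‖s‖ = 1) (hs' : ‖s'‖ = 1)
    (hinner : (inner ℝ s s' : ℝ) > -1)
    (θ : ℝ) (hθ : θ = Real.arccos (inner ℝ s s' : ℝ))
    (w : EuclideanSpace ℝ (Fin 3))
    (hw : w = if s' = s then 0 else (θ / Real.sin θ) • (s' - (inner ℝ s s' : ℝ) • s)) :
    (inner ℝ s w : ℝ) = 0 ∧ ‖w‖ = θ ∧ sphRetract s w = s' := by
  split_ifs at hw with heq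
  · subst s' hw
    have hθ0 : θ = 0 := by rw [hθ, real_inner_self_eq_norm_sq, hs, one_pow, arccos_one]
    exact ⟨inner_zero_right s, by rw [norm_zero, hθ0], sphRetract_zero s⟩
  · have hθpos : 0 < θ :=
      hθ ▸ arccos_pos.2 ((inner_lt_one_iff_real_of_norm_eq_one hs hs').2 (Ne.symm heq))
    have hsin : 0 < sin θ := sin_pos_of_pos_of_lt_pi hθpos (hθ ▸ arccos_lt_pi.2 hinner)
    have hcos : cos θ = inner ℝ s s' :=
      hθ ▸ cos_arccos hinner.le (real_inner_le_norm s s' |>.trans_eq (by rw [hs, hs', one_mul]))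
    have hnorm : ‖w‖ = θ := by
      rw [hw, norm_smul, norm_sub_inner_smul_self_eq_sin_arccos hs hs', ← hθ, Real.norm_eq_abs,
        abs_of_pos (div_pos hθpos hsin), div_mul_cancel₀ _ hsin.ne']
    refine ⟨by rw [hw, real_inner_smul_right, inner_sub_inner_smul_self_eq_zero hs, mul_zero],
      hnorm, ?_⟩
    rw [sphRetract_of_norm_eq hθpos.ne' hnorm, hcos, hw, smul_smul,
      div_mul_div_cancel₀ hθpos.ne', div_self hsin.ne', one_smul, add_sub_cancel]

/-- The inverse of the sphere exponential retraction is well-defined on the open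
hemisphere: with θ = arccos⟨s,s'⟩ and w = (θ/sin θ)(s' − ⟨s,s'⟩s) (w = 0 when
s' = s), one has w ∈ T_s S², ‖w‖ = θ, and R_s(w) = s'. -/
theorem stmt_15 (s s' : EuclideanSpace ℝ (Fin 3)) (hs : ‖s‖ = 1) (hs' : ‖s'‖ = 1)
    (hinner : (inner ℝ s s' : ℝ) > -1) (hne : s' ≠ -s)
    (θ : ℝ) (hθ : θ = Real.arccos (inner ℝ s s' : ℝ))
    (w : EuclideanSpace ℝ (Fin 3))
    (hw : w = if s' = s then 0 else (θ / Real.sin θ) • (s' - (inner ℝ s s' : ℝ) • s)) :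
    (inner ℝ s w : ℝ) = 0 ∧ ‖w‖ = θ ∧ sphRetract s w = s' :=
  stmt_15_general s s' hs hs' hinner θ hθ w hw
end
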